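/- arXiv:math/0110331 — 10 statements merged into one kernel-verified Lean document; each statement's English description precedes it below -/
import Mathlib

section
/- For all natural numbers p ≥ 1 and q ≥ 1, the number of (p,q)-shuffles having exactly one index responsible for an inversion equals p. -/
/-!
A shuffle is determined by the comparisons `π j < π i` between its two blocks. In a shuffle the
responsible indices form an initial segment of the second block, so if there is exactly one, it is
`p`, and every later index lies above the whole first block; the first-block indices `i` with
`π p < π i` form a final segment `k ≤ i < p`. These are exactly the comparisons of the cycle
`(k k+1 … p)`, so the shuffles in question are these `p` cycles, `0 ≤ k < p`.
-/

def IsShuffle (p q : ℕ) (π : Equiv.Perm (Fin (p + q))) : Prop :=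
  (∀ i j : Fin (p + q), i < j → (j : ℕ) < p → π i < π j) ∧
  (∀ i j : Fin (p + q), p ≤ (i : ℕ) → i < j → π i < π j)

def Responsible (p q : ℕ) (π : Equiv.Perm (Fin (p + q))) (j : Fin (p + q)) : Prop :=
  p ≤ (j : ℕ) ∧ ∃ i : Fin (p + q), (i : ℕ) < p ∧ π j < π i

open Equiv Finset

theorem Equiv.eq_of_apply_lt_apply_iff {α β : Type*} [LinearOrder β] [WellFoundedLT β]
    {π σ : α ≃ β} (h : ∀ s t, π s < π t ↔ σ s < σ t) : π = σ := by
  let e : β ≃o β :=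
    { toEquiv := π.symm.trans σ
      map_rel_iff' := fun {x y} => by
        simpa only [not_lt, coe_trans, Function.comp_apply, apply_symm_apply] using
          (h (π.symm y) (π.symm x)).not.symm }
  ext s
  simpa [e] using (congrArg (· (π s)) (Subsingleton.elim e (OrderIso.refl β))).symm

variable {p q : ℕ} {π σ : Perm (Fin (p + q))}

namespace IsShuffle

theorem strictMonoOn_lt (hπ : IsShuffle p q π) : StrictMonoOn π {i | (i : ℕ) < p} :=
  fun _ _ _ hj hij => hπ.1 _ _ hij hj

theorem strictMonoOn_ge (hπ : IsShuffle p q π) : StrictMonoOn π {i | p ≤ (i : ℕ)} :=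
  fun _ hi _ _ hij => hπ.2 _ _ hi hij

theorem ext (hπ : IsShuffle p q π) (hσ : IsShuffle p q σ)
    (h : ∀ i j : Fin (p + q), (i : ℕ) < p → p ≤ (j : ℕ) → (π j < π i ↔ σ j < σ i)) :
    π = σ := by
  have lt_iff_not_lt : ∀ (τ : Perm (Fin (p + q))) {s t}, s ≠ t → (τ s < τ t ↔ ¬ τ t < τ s) :=
    fun τ _ _ hst => by rw [lt_iff_le_and_ne, not_lt]; exact and_iff_left (τ.injective.ne hst)
  refine Equiv.eq_of_apply_lt_apply_iff fun s t => ?_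
  rcases lt_or_ge (s : ℕ) p with hs | hs <;> rcases lt_or_ge (t : ℕ) p with ht | ht
  · rw [hπ.strictMonoOn_lt.lt_iff_lt hs ht, hσ.strictMonoOn_lt.lt_iff_lt hs ht]
  · have hst : s ≠ t := fun h => by omega
    rw [lt_iff_not_lt π hst, lt_iff_not_lt σ hst, h s t hs ht]
  · exact h t s ht hs
  · rw [hπ.strictMonoOn_ge.lt_iff_lt hs ht, hσ.strictMonoOn_ge.lt_iff_lt hs ht]

theorem exists_lt_iff_le (hπ : IsShuffle p q π) (j : Fin (p + q))
    (h : ∃ i : Fin (p + q), (i : ℕ) < p ∧ π j < π i) :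
    ∃ k : Fin p, ∀ i : Fin (p + q), (i : ℕ) < p → (π j < π i ↔ (k : ℕ) ≤ i) := by
  let S := univ.filter fun i : Fin (p + q) => (i : ℕ) < p ∧ π j < π i
  have hS : S.Nonempty := by simpa [S, Finset.Nonempty] using h
  obtain ⟨hk, hjk⟩ := (mem_filter.1 (S.min'_mem hS)).2
  refine ⟨⟨S.min' hS, hk⟩, fun i hi => ⟨fun hji => ?_, fun hki => ?_⟩⟩
  · exact Fin.le_def.1 (S.min'_le i (mem_filter.2 ⟨mem_univ _, hi, hji⟩))
  · exact hjk.trans_le ((hπ.strictMonoOn_lt.le_iff_le hk hi).2 (Fin.le_def.2 hki))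

end IsShuffle

theorem Responsible.of_le (hπ : IsShuffle p q π) {j j' : Fin (p + q)}
    (hj : Responsible p q π j) (hj' : p ≤ (j' : ℕ)) (hle : j' ≤ j) : Responsible p q π j' :=
  let ⟨hpj, i, hi, hlt⟩ := hj
  ⟨hj', i, hi, ((hπ.strictMonoOn_ge.le_iff_le hj' hpj).2 hle).trans_lt hlt⟩

theorem responsible_iff_of_existsUnique (hπ : IsShuffle p q π)
    (h : ∃! j, Responsible p q π j) (j : Fin (p + q)) : Responsible p q π j ↔ (j : ℕ) = p := by
  obtain ⟨j₀, hj₀, huniq⟩ := h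
  have hp : p < p + q := lt_of_le_of_lt hj₀.1 j₀.2
  have hj₀p : j₀ = ⟨p, hp⟩ :=
    (huniq _ (hj₀.of_le hπ le_rfl (Fin.le_def.2 hj₀.1))).symm
  refine ⟨fun hj => by rw [huniq j hj, hj₀p], fun hj => ?_⟩
  rwa [show j = j₀ from Fin.ext (by rw [hj, hj₀p])]

def insertShuffle (hq : 0 < q) (k : Fin p) : Perm (Fin (p + q)) :=
  Fin.cycleIcc (Fin.castAdd q k) ⟨p, by omega⟩

theorem val_insertShuffle (hq : 0 < q) (k : Fin p) (j : Fin (p + q)) :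
    (insertShuffle hq k j : ℕ) =
      if (j : ℕ) < k ∨ p < j then (j : ℕ) else if (j : ℕ) = p then (k : ℕ) else (j : ℕ) + 1 := by
  have : NeZero (p + q) := ⟨by omega⟩
  have hk := k.2
  unfold insertShuffle
  by_cases h₁ : (j : ℕ) < k
  · rw [Fin.cycleIcc_of_lt (Fin.lt_def.2 h₁), if_pos (.inl h₁)]
  by_cases h₂ : p < (j : ℕ)
  · rw [Fin.cycleIcc_of_gt (Fin.lt_def.2 h₂), if_pos (.inr h₂)]
  rw [if_neg (by omega)]
  by_cases h₃ : (j : ℕ) = p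
  · rw [show j = ⟨p, by omega⟩ from Fin.ext h₃, Fin.cycleIcc_of_last (Fin.le_def.2 hk.le),
      if_pos rfl]
    rfl
  · rw [Fin.cycleIcc_of_ge_of_lt (Fin.le_def.2 (show (k : ℕ) ≤ j by omega))
      (Fin.lt_def.2 (show (j : ℕ) < p by omega)),
      if_neg h₃, Fin.val_add_one_of_lt' (by omega)]

theorem isShuffle_insertShuffle (hq : 0 < q) (k : Fin p) :
    IsShuffle p q (insertShuffle hq k) := by
  have hk := k.2
  constructor <;> intro i j <;> simp only [Fin.lt_def, val_insertShuffle] <;> split_ifs <;> omega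

theorem responsible_insertShuffle_iff (hq : 0 < q) (k : Fin p) (j : Fin (p + q)) :
    Responsible p q (insertShuffle hq k) j ↔ (j : ℕ) = p := by
  have hk := k.2
  refine ⟨fun ⟨hj, i, hi, hlt⟩ => ?_, fun hj => ⟨hj.ge, Fin.castAdd q k, hk, ?_⟩⟩
  · rw [Fin.lt_def, val_insertShuffle, val_insertShuffle] at hlt
    split_ifs at hlt <;> omega
  · rw [Fin.lt_def, val_insertShuffle, val_insertShuffle, Fin.val_castAdd]
    split_ifs <;> omega

theorem insertShuffle_injective (hq : 0 < q) : Function.Injective (insertShuffle (p := p) hq) :=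
  fun k k' h => by
    have hP := congrArg (fun σ => (σ ⟨p, by omega⟩ : ℕ)) h
    simp only [val_insertShuffle, lt_irrefl, or_false, if_true, if_neg k.2.not_gt,
      if_neg k'.2.not_gt] at hP
    exact Fin.ext hP

theorem eq_insertShuffle_of_existsUnique (hq : 0 < q) (hπ : IsShuffle p q π)
    (h : ∃! j, Responsible p q π j) : ∃ k, π = insertShuffle hq k := by
  have hresp := responsible_iff_of_existsUnique hπ h
  let P : Fin (p + q) := ⟨p, by omega⟩
  obtain ⟨k, hk⟩ := hπ.exists_lt_iff_le P ((hresp P).2 rfl).2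
  refine ⟨k, hπ.ext (isShuffle_insertShuffle hq _) fun i j hi hj => ?_⟩
  have hσ : insertShuffle hq k j < insertShuffle hq k i ↔
      (j : ℕ) = p ∧ (k : ℕ) ≤ i := by
    have := k.2
    rw [Fin.lt_def, val_insertShuffle, val_insertShuffle]
    split_ifs <;> omega
  rw [hσ]
  by_cases hjp : (j : ℕ) = p
  · rw [show j = P from Fin.ext hjp, hk i hi, and_iff_right rfl]
  · exact ⟨fun hlt => absurd ((hresp j).1 ⟨hj, i, hi, hlt⟩) hjp, fun h => absurd h.1 hjp⟩

theorem isShuffle_and_existsUnique_responsible_iff (hq : 0 < q) :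
    (IsShuffle p q π ∧ ∃! j, Responsible p q π j) ↔ π ∈ Set.range (insertShuffle hq) := by
  refine ⟨fun ⟨hπ, h⟩ => ?_, ?_⟩
  · obtain ⟨k, rfl⟩ := eq_insertShuffle_of_existsUnique hq hπ h
    exact ⟨k, rfl⟩
  · rintro ⟨k, rfl⟩
    refine ⟨isShuffle_insertShuffle hq k, ⟨p, by omega⟩, ?_, fun j hj => ?_⟩
    · exact (responsible_insertShuffle_iff hq k _).2 rfl
    · exact Fin.ext ((responsible_insertShuffle_iff hq k j).1 hj)

theorem card_shuffles_one_inversion_general (p q : ℕ) (hq : 1 ≤ q) :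
    Nat.card {π : Equiv.Perm (Fin (p + q)) //
      IsShuffle p q π ∧ ∃! j : Fin (p + q), Responsible p q π j} = p := by
  rw [Nat.card_congr (Equiv.subtypeEquivRight fun π =>
      isShuffle_and_existsUnique_responsible_iff (π := π) hq),
    Nat.card_range_of_injective (insertShuffle_injective hq), Nat.card_fin]

/-- For `p, q ≥ 1`, the number of `(p,q)`-shuffles having exactly one index
responsible for an inversion equals `p`. -/
theorem card_shuffles_one_inversion (p q : ℕ) (hp : 1 ≤ p) (hq : 1 ≤ q) :
    Nat.card {π : Equiv.Perm (Fin (p + q)) //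
      IsShuffle p q π ∧ ∃! j : Fin (p + q), Responsible p q π j} = p :=
  card_shuffles_one_inversion_general p q hq
end

section
/- For all natural numbers p ≥ 1 and q ≥ 1, the number of (p,q)-shuffles having at least two indices responsible for an inversion equals C(p+q, p) − p − 1. -/
open Finset


lemma card_filter_lt (n m : ℕ) (hm : m ≤ n) :
    ((univ : Finset (Fin n)).filter fun i : Fin n => (i : ℕ) < m).card = m := by
  have h : ((univ : Finset (Fin n)).filter fun i : Fin n => (i : ℕ) < m)
      = (univ : Finset (Fin m)).map ⟨Fin.castLE hm, Fin.castLE_injective hm⟩ := by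
    ext x
    simp only [mem_filter, mem_univ, true_and, mem_map, Function.Embedding.coeFn_mk]
    constructor
    · intro hx; exact ⟨⟨x, hx⟩, rfl⟩
    · rintro ⟨a, rfl⟩; exact a.2
  rw [h, card_map, card_univ, Fintype.card_fin]

section aux

variable {p q : ℕ}

/-- The underlying function of the shuffle associated to a `p`-subset `A`. -/
def shufFun (A : Finset (Fin (p + q))) (hA : A.card = p) (hA' : Aᶜ.card = q) :
    Fin (p + q) → Fin (p + q) := fun i =>
  if h : (i : ℕ) < p then A.orderEmbOfFin hA ⟨i, h⟩
  else Aᶜ.orderEmbOfFin hA' ⟨(i : ℕ) - p, by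
    have := i.2; omega⟩

lemma shufFun_inj (A : Finset (Fin (p + q))) (hA : A.card = p) (hA' : Aᶜ.card = q) :
    Function.Injective (shufFun A hA hA') := by
  intro i j hij
  unfold shufFun at hij
  split_ifs at hij with h1 h2 h2
  · have := (A.orderEmbOfFin hA).injective hij
    have := Fin.mk.injEq .. ▸ this
    exact Fin.ext (by simpa using this)
  · exact absurd (hij ▸ A.orderEmbOfFin_mem hA ⟨i, h1⟩)
      (Finset.mem_compl.mp (Aᶜ.orderEmbOfFin_mem hA' _))
  · exact absurd (hij.symm ▸ A.orderEmbOfFin_mem hA ⟨j, h2⟩)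
      (Finset.mem_compl.mp (Aᶜ.orderEmbOfFin_mem hA' _))
  · have := (Aᶜ.orderEmbOfFin hA').injective hij
    have h3 : (i : ℕ) - p = (j : ℕ) - p := by simpa using this
    exact Fin.ext (by omega)

/-- The shuffle associated to a `p`-subset `A`. -/
noncomputable def shufPerm (A : Finset (Fin (p + q))) (hA : A.card = p) (hA' : Aᶜ.card = q) :
    Equiv.Perm (Fin (p + q)) :=
  Equiv.ofBijective _ ((Finite.injective_iff_bijective).mp (shufFun_inj A hA hA'))

lemma shufPerm_apply (A : Finset (Fin (p + q))) (hA : A.card = p) (hA' : Aᶜ.card = q)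
    (i : Fin (p + q)) : shufPerm A hA hA' i = shufFun A hA hA' i := rfl

lemma shufPerm_isShuffle (A : Finset (Fin (p + q))) (hA : A.card = p) (hA' : Aᶜ.card = q) :
    IsShuffle p q (shufPerm A hA hA') := by
  constructor
  · intro i j hij hjp
    have hip : (i : ℕ) < p := lt_trans hij hjp
    rw [shufPerm_apply, shufPerm_apply, shufFun, shufFun, dif_pos hip, dif_pos hjp]
    exact (A.orderEmbOfFin hA).strictMono (by exact hij)
  · intro i j hip hij
    have hjp : p ≤ (j : ℕ) := le_trans hip (le_of_lt hij)
    rw [shufPerm_apply, shufPerm_apply, shufFun, shufFun,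
      dif_neg (by omega), dif_neg (by omega)]
    refine (Aᶜ.orderEmbOfFin hA').strictMono ?_
    have : (i : ℕ) < (j : ℕ) := hij
    exact Fin.mk_lt_mk.mpr (by omega)

/-- The first-block image of a permutation. -/
def firstBlock (π : Equiv.Perm (Fin (p + q))) : Finset (Fin (p + q)) :=
  ((univ : Finset (Fin (p + q))).filter fun i : Fin (p + q) => (i : ℕ) < p).image π

lemma mem_firstBlock {π : Equiv.Perm (Fin (p + q))} {x : Fin (p + q)} :
    x ∈ firstBlock π ↔ ∃ i : Fin (p + q), (i : ℕ) < p ∧ π i = x := by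
  simp [firstBlock]

lemma firstBlock_card (π : Equiv.Perm (Fin (p + q))) : (firstBlock π).card = p := by
  rw [firstBlock, card_image_of_injective _ π.injective,
    card_filter_lt _ _ (Nat.le_add_right p q)]

lemma notMem_firstBlock {π : Equiv.Perm (Fin (p + q))} {j : Fin (p + q)}
    (hj : p ≤ (j : ℕ)) : π j ∉ firstBlock π := by
  rw [mem_firstBlock]
  rintro ⟨i, hi, hie⟩
  have := π.injective hie
  omega

end aux

section aux2

variable {p q : ℕ}

lemma compl_card {A : Finset (Fin (p + q))} (hA : A.card = p) : Aᶜ.card = q := by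
  rw [card_compl, hA, Fintype.card_fin]
  omega

lemma firstBlock_shufPerm (A : Finset (Fin (p + q))) (hA : A.card = p) (hA' : Aᶜ.card = q) :
    firstBlock (shufPerm A hA hA') = A := by
  refine eq_of_subset_of_card_le (fun x hx => ?_) ?_
  · obtain ⟨i, hi, he⟩ := mem_firstBlock.mp hx
    rw [shufPerm_apply, shufFun, dif_pos hi] at he
    exact he ▸ A.orderEmbOfFin_mem hA _
  · rw [hA, firstBlock_card]

lemma shufPerm_eq_of_isShuffle (π : Equiv.Perm (Fin (p + q))) (hπ : IsShuffle p q π)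
    (hA' : (firstBlock π)ᶜ.card = q) :
    shufPerm (firstBlock π) (firstBlock_card π) hA' = π := by
  have hf : (fun k : Fin p => π (Fin.castLE (Nat.le_add_right p q) k))
      = (firstBlock π).orderEmbOfFin (firstBlock_card π) := by
    refine orderEmbOfFin_unique _ (fun x => mem_firstBlock.mpr ⟨_, by simp, rfl⟩) ?_
    intro a b hab
    exact hπ.1 _ _ (by simpa using hab) (by simpa using b.2)
  have hg : (fun k : Fin q => π ⟨p + (k : ℕ), by omega⟩)
      = (firstBlock π)ᶜ.orderEmbOfFin hA' := by
    refine orderEmbOfFin_unique _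
      (fun x => mem_compl.mpr (notMem_firstBlock (by simp))) ?_
    intro a b hab
    exact hπ.2 _ _ (by simp) (by simpa using hab)
  refine Equiv.ext fun i => ?_
  rw [shufPerm_apply, shufFun]
  split_ifs with h
  · rw [← congrFun hf ⟨(i : ℕ), h⟩]
    congr 1
  · have hival : i = ⟨p + ((i : ℕ) - p), by have := i.2; omega⟩ := Fin.ext (by simp; omega)
    conv_rhs => rw [hival]
    exact (congrFun hg ⟨(i : ℕ) - p, by have := i.2; omega⟩).symm

lemma cond_iff_D (π : Equiv.Perm (Fin (p + q))) :
    (∃ j₁ j₂ : Fin (p + q), j₁ ≠ j₂ ∧ Responsible p q π j₁ ∧ Responsible p q π j₂) ↔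
      ∃ x y : Fin (p + q), x ≠ y ∧ x ∉ firstBlock π ∧ y ∉ firstBlock π ∧
        (∃ a ∈ firstBlock π, x < a) ∧ (∃ b ∈ firstBlock π, y < b) := by
  constructor
  · rintro ⟨j₁, j₂, hne, ⟨hj₁, i₁, hi₁, hlt₁⟩, ⟨hj₂, i₂, hi₂, hlt₂⟩⟩
    exact ⟨π j₁, π j₂, fun h => hne (π.injective h),
      notMem_firstBlock hj₁, notMem_firstBlock hj₂,
      ⟨π i₁, mem_firstBlock.mpr ⟨i₁, hi₁, rfl⟩, hlt₁⟩,
      ⟨π i₂, mem_firstBlock.mpr ⟨i₂, hi₂, rfl⟩, hlt₂⟩⟩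
  · rintro ⟨x, y, hxy, hx, hy, ⟨a, ha, hxa⟩, ⟨b, hb, hyb⟩⟩
    have key : ∀ z : Fin (p + q), z ∉ firstBlock π → p ≤ ((π.symm z : Fin (p + q)) : ℕ) := by
      intro z hz
      by_contra h
      exact hz (mem_firstBlock.mpr ⟨π.symm z, by omega, π.apply_symm_apply z⟩)
    obtain ⟨i₁, hi₁, hπi₁⟩ := mem_firstBlock.mp ha
    obtain ⟨i₂, hi₂, hπi₂⟩ := mem_firstBlock.mp hb
    refine ⟨π.symm x, π.symm y, fun h => hxy (by
      have := congrArg π h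
      simpa using this), ⟨key x hx, i₁, hi₁, ?_⟩, ⟨key y hy, i₂, hi₂, ?_⟩⟩
    · rw [π.apply_symm_apply, hπi₁]; exact hxa
    · rw [π.apply_symm_apply, hπi₂]; exact hyb

lemma D_iff_E {A : Finset (Fin (p + q))} (hp : 1 ≤ p) (hq : 1 ≤ q) (hA : A.card = p) :
    (∃ x y : Fin (p + q), x ≠ y ∧ x ∉ A ∧ y ∉ A ∧
        (∃ a ∈ A, x < a) ∧ (∃ b ∈ A, y < b)) ↔ ∃ a ∈ A, p + 1 ≤ (a : ℕ) := by
  constructor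
  · rintro ⟨x, y, hxy, hx, hy, ⟨a, ha, hxa⟩, ⟨b, hb, hyb⟩⟩
    by_contra h
    push_neg at h
    set K := (univ : Finset (Fin (p + q))).filter fun z : Fin (p + q) => (z : ℕ) < p + 1 with hK
    have hKcard : K.card = p + 1 := card_filter_lt _ _ (by omega)
    have hAK : A ⊆ K := fun z hz => mem_filter.mpr ⟨mem_univ _, by have := h z hz; omega⟩
    have hxK : x ∈ K \ A := mem_sdiff.mpr ⟨mem_filter.mpr ⟨mem_univ _, by
      have h1 : (x : ℕ) < (a : ℕ) := hxa
      have := h a ha; omega⟩, hx⟩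
    have hyK : y ∈ K \ A := mem_sdiff.mpr ⟨mem_filter.mpr ⟨mem_univ _, by
      have h1 : (y : ℕ) < (b : ℕ) := hyb
      have := h b hb; omega⟩, hy⟩
    have hcard : (K \ A).card ≤ 1 := by
      rw [card_sdiff_of_subset hAK, hKcard, hA]; omega
    exact hxy (Finset.card_le_one.mp hcard x hxK y hyK)
  · rintro ⟨a, ha, hpa⟩
    set L := (univ : Finset (Fin (p + q))).filter fun z : Fin (p + q) => (z : ℕ) < (a : ℕ)
      with hL
    have hLcard : L.card = (a : ℕ) := card_filter_lt _ _ (le_of_lt a.2)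
    have hsplit := Finset.card_filter_add_card_filter_not
      (s := L) (p := fun z => z ∈ A)
    have hsub : L.filter (fun z => z ∈ A) ⊆ A.erase a := by
      intro z hz
      rw [mem_filter, hL, mem_filter] at hz
      refine mem_erase.mpr ⟨?_, hz.2⟩
      intro hza
      rw [hza] at hz
      omega
    have hle : (L.filter (fun z => z ∈ A)).card ≤ p - 1 := by
      have := card_le_card hsub
      rwa [card_erase_of_mem ha, hA] at this
    have h2 : 2 ≤ (L.filter (fun z => z ∉ A)).card := by omega
    obtain ⟨x, hx, y, hy, hxy⟩ := Finset.one_lt_card.mp (by omega :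
      1 < (L.filter (fun z => z ∉ A)).card)
    rw [mem_filter, hL, mem_filter] at hx hy
    refine ⟨x, y, hxy, hx.2, hy.2, ⟨a, ha, ?_⟩, ⟨a, ha, ?_⟩⟩
    · exact Fin.lt_def.mpr hx.1.2
    · exact Fin.lt_def.mpr hy.1.2

lemma count_subsets (hp : 1 ≤ p) (hq : 1 ≤ q) :
    ((univ : Finset (Finset (Fin (p + q)))).filter fun A : Finset (Fin (p + q)) =>
        A.card = p ∧ ∃ a ∈ A, p + 1 ≤ (a : ℕ)).card = (p + q).choose p - p - 1 := by
  classical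
  have hsplit : ((univ : Finset (Finset (Fin (p + q)))).filter fun A : Finset (Fin (p + q)) =>
        A.card = p ∧ (∃ a ∈ A, p + 1 ≤ (a : ℕ))).card +
      ((univ : Finset (Finset (Fin (p + q)))).filter fun A : Finset (Fin (p + q)) =>
        A.card = p ∧ ¬ (∃ a ∈ A, p + 1 ≤ (a : ℕ))).card =
      ((univ : Finset (Finset (Fin (p + q)))).filter fun A : Finset (Fin (p + q)) => A.card = p).card := by
    rw [← Finset.filter_filter, ← Finset.filter_filter]
    exact Finset.card_filter_add_card_filter_not _
  have htot : ((univ : Finset (Finset (Fin (p + q)))).filter fun A : Finset (Fin (p + q)) => A.card = p).card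
      = (p + q).choose p := by
    have : ((univ : Finset (Finset (Fin (p + q)))).filter fun A : Finset (Fin (p + q)) => A.card = p)
        = powersetCard p (univ : Finset (Fin (p + q))) := by
      ext A; simp [Finset.mem_powersetCard_univ]
    rw [this, card_powersetCard, card_univ, Fintype.card_fin]
  have hbad : ((univ : Finset (Finset (Fin (p + q)))).filter fun A : Finset (Fin (p + q)) =>
      A.card = p ∧ ¬ (∃ a ∈ A, p + 1 ≤ (a : ℕ))).card = p + 1 := by
    set K := (univ : Finset (Fin (p + q))).filter fun z : Fin (p + q) => (z : ℕ) < p + 1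
      with hK
    have hKcard : K.card = p + 1 := card_filter_lt _ _ (by omega)
    have : ((univ : Finset (Finset (Fin (p + q)))).filter fun A : Finset (Fin (p + q)) => A.card = p ∧ ¬ (∃ a ∈ A, p + 1 ≤ (a : ℕ)))
        = powersetCard p K := by
      ext A
      simp only [mem_filter, mem_univ, true_and, Finset.mem_powersetCard]
      constructor
      · rintro ⟨hc, hne⟩
        push_neg at hne
        exact ⟨fun z hz => mem_filter.mpr ⟨mem_univ _, by have := hne z hz; omega⟩, hc⟩
      · rintro ⟨hs, hc⟩
        refine ⟨hc, ?_⟩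
        push_neg
        intro z hz
        have := (mem_filter.mp (hs hz)).2
        omega
    rw [this, card_powersetCard, hKcard, Nat.choose_succ_self_right]
  have hmono : p + 1 ≤ (p + q).choose p := by
    calc p + 1 = (p + 1).choose p := (Nat.choose_succ_self_right p).symm
    _ ≤ (p + q).choose p := Nat.choose_le_choose p (by omega)
  omega

end aux2


/-- For `p, q ≥ 1`, the number of `(p,q)`-shuffles having at least two indices
responsible for an inversion equals `C(p+q, p) - p - 1`. -/
theorem card_shuffles_two_inversions (p q : ℕ) (hp : 1 ≤ p) (hq : 1 ≤ q) :
    Nat.card {π : Equiv.Perm (Fin (p + q)) //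
      IsShuffle p q π ∧ ∃ j₁ j₂ : Fin (p + q), j₁ ≠ j₂ ∧
        Responsible p q π j₁ ∧ Responsible p q π j₂} = (p + q).choose p - p - 1 := by
  classical
  have e : {π : Equiv.Perm (Fin (p + q)) //
      IsShuffle p q π ∧ ∃ j₁ j₂ : Fin (p + q), j₁ ≠ j₂ ∧
        Responsible p q π j₁ ∧ Responsible p q π j₂} ≃
      {A : Finset (Fin (p + q)) // A.card = p ∧ ∃ a ∈ A, p + 1 ≤ (a : ℕ)} :=
    { toFun := fun x => ⟨firstBlock x.1, firstBlock_card x.1,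
        (D_iff_E hp hq (firstBlock_card x.1)).mp ((cond_iff_D x.1).mp x.2.2)⟩
      invFun := fun A => ⟨shufPerm A.1 A.2.1 (compl_card A.2.1),
        shufPerm_isShuffle A.1 A.2.1 (compl_card A.2.1), by
          refine (cond_iff_D _).mpr ((D_iff_E hp hq (firstBlock_card _)).mpr ?_)
          rw [firstBlock_shufPerm]
          exact A.2.2⟩
      left_inv := fun x => Subtype.ext (shufPerm_eq_of_isShuffle x.1 x.2.1 _)
      right_inv := fun A => Subtype.ext (firstBlock_shufPerm A.1 A.2.1 (compl_card A.2.1)) }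
  rw [Nat.card_congr e, Nat.card_eq_fintype_card, Fintype.card_subtype]
  exact count_subsets hp hq
end

section
/- (Basic Perturbation Lemma, part 1.) Under the perturbation setup, the perturbed differential on M squares to zero: (d_M + d_δ) ∘ (d_M + d_δ) = 0, where d_δ = f ∘ δ ∘ Σ ∘ g. -/
open LinearMap

/-!
Write `a = δ Σ` and `P = 1 + δ φ`, `Q = 1 + φ δ`. Nilpotency makes `Σ` a two-sided inverse of `Q`,
and then `1 - δ Σ φ` is a left inverse of `P` (Jacobson's trick), so `P a = δ = a Q`. Hence the
obstruction `X = d a + a d + a (1 - φ d - d φ) a` satisfies `P X Q = d δ + δ d + δ δ = 0`, and `X = 0`.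
Since `f`, `g` are chain maps and `g f = 1 - φ d - d φ`, the square of `d_M + f a g` is `f X g`.
-/

section Ring

variable {A : Type*} [Ring A]

theorem one_add_mul_geom_sum_neg_of_pow_eq_zero {x : A} {n : ℕ} (hx : x ^ n = 0) :
    (1 + x) * ∑ i ∈ Finset.range n, (-x) ^ i = 1 := by
  have h := mul_neg_geom_sum (-x) n
  rwa [neg_pow, hx, mul_zero, sub_zero, sub_neg_eq_add] at h

theorem geom_sum_neg_mul_one_add_of_pow_eq_zero {x : A} {n : ℕ} (hx : x ^ n = 0) :
    (∑ i ∈ Finset.range n, (-x) ^ i) * (1 + x) = 1 := by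
  have h := geom_sum_mul_neg (-x) n
  rwa [neg_pow, hx, mul_zero, sub_zero, sub_neg_eq_add] at h

theorem perturbation_obstruction_eq_zero {d δ φ s : A} (hδ : d * δ + δ * d + δ * δ = 0)
    (hs : (1 + φ * δ) * s = 1) (hs' : s * (1 + φ * δ) = 1) :
    d * (δ * s) + δ * s * d + δ * s * (1 - φ * d - d * φ) * (δ * s) = 0 := by
  have hleft : (1 - δ * s * φ) * (1 + δ * φ) = 1 := by
    linear_combination (norm := noncomm_ring) -(δ * hs' * φ)
  have hP : (1 + δ * φ) * (δ * s) = δ := by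
    linear_combination (norm := noncomm_ring) δ * hs
  have hQ : δ * s * (1 + φ * δ) = δ := by
    linear_combination (norm := noncomm_ring) δ * hs'
  set a := δ * s
  have hconj : (1 + δ * φ) * (d * a + a * d + a * (1 - φ * d - d * φ) * a) * (1 + φ * δ)
      = d * δ + δ * d + δ * δ := by
    linear_combination (norm := noncomm_ring)
      (1 + δ * φ) * d * hQ + hP * d * (1 + φ * δ) + hP * a * (1 + φ * δ) + δ * hQ
        - hP * φ * d * a * (1 + φ * δ) - δ * φ * d * hQ
        - hP * d * φ * a * (1 + φ * δ) - δ * d * φ * hQ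
  calc d * a + a * d + a * (1 - φ * d - d * φ) * a
      = (1 - a * φ) * (1 + δ * φ) * (d * a + a * d + a * (1 - φ * d - d * φ) * a)
          * ((1 + φ * δ) * s) := by rw [hleft, hs, one_mul, mul_one]
    _ = (1 - a * φ) * ((1 + δ * φ) * (d * a + a * d + a * (1 - φ * d - d * φ) * a)
          * (1 + φ * δ)) * s := by simp only [mul_assoc]
    _ = 0 := by rw [hconj, hδ, mul_zero, zero_mul]

end Ring

theorem LinearMap.add_comp_comp_comp_self_eq_zero {R N M : Type*} [Semiring R]
    [AddCommGroup N] [Module R N] [AddCommGroup M] [Module R M]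
    {dN a : N →ₗ[R] N} {dM : M →ₗ[R] M} {f : N →ₗ[R] M} {g : M →ₗ[R] N}
    (hdM : dM ∘ₗ dM = 0) (hf : f ∘ₗ dN = dM ∘ₗ f) (hg : g ∘ₗ dM = dN ∘ₗ g)
    (ha : dN ∘ₗ a + a ∘ₗ dN + a ∘ₗ (g ∘ₗ f) ∘ₗ a = 0) :
    (dM + f ∘ₗ a ∘ₗ g) ∘ₗ (dM + f ∘ₗ a ∘ₗ g) = 0 := by
  calc (dM + f ∘ₗ a ∘ₗ g) ∘ₗ (dM + f ∘ₗ a ∘ₗ g)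
      = dM ∘ₗ dM + f ∘ₗ (dN ∘ₗ a + a ∘ₗ dN + a ∘ₗ (g ∘ₗ f) ∘ₗ a) ∘ₗ g := by
        have hf' : dM ∘ₗ f ∘ₗ a ∘ₗ g = f ∘ₗ dN ∘ₗ a ∘ₗ g := by
          rw [← comp_assoc (h := dM), ← hf, comp_assoc]
        simp only [comp_add, add_comp, comp_assoc, hg, hf']
        abel
    _ = 0 := by rw [hdM, ha, zero_comp, comp_zero, add_zero]

theorem bpl_perturbed_differential_sq_zero_general
    (R : Type*) [CommRing R] (N M : Type*)
    [AddCommGroup N] [Module R N] [AddCommGroup M] [Module R M]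
    (dN : N →ₗ[R] N) (dM : M →ₗ[R] M)
    (hdN : dN ∘ₗ dN = 0) (hdM : dM ∘ₗ dM = 0)
    (f : N →ₗ[R] M) (g : M →ₗ[R] N) (φ : N →ₗ[R] N)
    (hf : f ∘ₗ dN = dM ∘ₗ f) (hg : g ∘ₗ dM = dN ∘ₗ g)
    (hhom : φ ∘ₗ dN + dN ∘ₗ φ + g ∘ₗ f = LinearMap.id)
    (δ : N →ₗ[R] N) (hδ : (dN + δ) ∘ₗ (dN + δ) = 0)
    (n : ℕ) (hnil : (φ ∘ₗ δ) ^ n = 0) :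
    (dM + f ∘ₗ δ ∘ₗ (∑ i ∈ Finset.range n, ((-1 : R) ^ i • (φ ∘ₗ δ) ^ i)) ∘ₗ g) ∘ₗ
      (dM + f ∘ₗ δ ∘ₗ (∑ i ∈ Finset.range n, ((-1 : R) ^ i • (φ ∘ₗ δ) ^ i)) ∘ₗ g) = 0 := by
  have hsum : ∑ i ∈ Finset.range n, ((-1 : R) ^ i • (φ ∘ₗ δ) ^ i)
      = ∑ i ∈ Finset.range n, (-(φ * δ)) ^ i :=
    Finset.sum_congr rfl fun i _ => by rw [← smul_pow, neg_one_smul]; rfl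
  have hperturb : dN * δ + δ * dN + δ * δ = 0 := by
    have hδ' : (dN + δ) * (dN + δ) = 0 := hδ
    have hdN' : dN * dN = 0 := hdN
    linear_combination (norm := noncomm_ring) hδ' - hdN'
  have hgf : g ∘ₗ f = 1 - φ * dN - dN * φ := by
    have hhom' : φ * dN + dN * φ + g ∘ₗ f = 1 := hhom
    linear_combination (norm := noncomm_ring) hhom'
  rw [hsum, ← comp_assoc (h := δ)]
  refine add_comp_comp_comp_self_eq_zero hdM hf hg ?_
  rw [hgf]
  exact perturbation_obstruction_eq_zero hperturb
    (one_add_mul_geom_sum_neg_of_pow_eq_zero hnil)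
    (geom_sum_neg_mul_one_add_of_pow_eq_zero hnil)

/-- Basic Perturbation Lemma, part 1: the perturbed differential
`dM + d_δ` on `M` squares to zero, where `d_δ = f ∘ δ ∘ Σ ∘ g` and
`Σ = ∑_{i<n} (-1)^i (φ ∘ δ)^i`. -/
theorem bpl_perturbed_differential_sq_zero
    (R : Type*) [CommRing R] (N M : Type*)
    [AddCommGroup N] [Module R N] [AddCommGroup M] [Module R M]
    (dN : N →ₗ[R] N) (dM : M →ₗ[R] M)
    (hdN : dN ∘ₗ dN = 0) (hdM : dM ∘ₗ dM = 0)
    (f : N →ₗ[R] M) (g : M →ₗ[R] N) (φ : N →ₗ[R] N)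
    (hf : f ∘ₗ dN = dM ∘ₗ f) (hg : g ∘ₗ dM = dN ∘ₗ g)
    (hfg : f ∘ₗ g = LinearMap.id)
    (hhom : φ ∘ₗ dN + dN ∘ₗ φ + g ∘ₗ f = LinearMap.id)
    (hfφ : f ∘ₗ φ = 0) (hφg : φ ∘ₗ g = 0) (hφφ : φ ∘ₗ φ = 0)
    (δ : N →ₗ[R] N) (hδ : (dN + δ) ∘ₗ (dN + δ) = 0)
    (n : ℕ) (hnil : (φ ∘ₗ δ) ^ n = 0) :
    (dM + f ∘ₗ δ ∘ₗ (∑ i ∈ Finset.range n, ((-1 : R) ^ i • (φ ∘ₗ δ) ^ i)) ∘ₗ g) ∘ₗ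
      (dM + f ∘ₗ δ ∘ₗ (∑ i ∈ Finset.range n, ((-1 : R) ^ i • (φ ∘ₗ δ) ^ i)) ∘ₗ g) = 0 :=
  bpl_perturbed_differential_sq_zero_general R N M dN dM hdN hdM f g φ hf hg hhom δ hδ n hnil
end

section
/- (Basic Perturbation Lemma, part 2.) Under the perturbation setup, the perturbed projection f_δ = f ∘ (id_N − δ ∘ Σ ∘ φ) is a chain map with respect to the perturbed differentials: f_δ ∘ (d_N + δ) = (d_M + d_δ) ∘ f_δ. -/
open LinearMap

/-- Pure ring-theoretic core of the computation. -/
lemma bpl_ring_aux {A : Type*} [Ring A] (D e p s G : A)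
    (hDD : D * D = 0) (hpert : (D + e) * (D + e) = 0)
    (hG : p * D + D * p + G = 1)
    (hs1 : s * (1 + p * e) = 1) (hs2 : (1 + p * e) * s = 1) :
    (1 - e * s * p) * (D + e) = D * (1 - e * s * p) + e * s * (G * (1 - e * s * p)) := by
  have hGe : G = 1 - p * D - D * p := by
    have := hG; linear_combination (norm := noncomm_ring) this
  have r1 : s + s * p * e - 1 = 0 := by
    linear_combination (norm := noncomm_ring) hs1
  have r2 : s + p * e * s - 1 = 0 := by
    linear_combination (norm := noncomm_ring) hs2
  have r3 : D * e + e * D + e * e = 0 := by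
    linear_combination (norm := noncomm_ring) hpert - hDD
  subst hGe
  have key : (1 - e * s * p) * (D + e)
      - (D * (1 - e * s * p) + e * s * ((1 - p * D - D * p) * (1 - e * s * p)))
      = -(e * (s + s * p * e - 1)) + (D * e + e * D + e * e) * (s * p)
        - e * s * p * ((D * e + e * D + e * e) * (s * p))
        + e * ((s + s * p * e - 1) * (D * (s * p)))
        + e * ((s + s * p * e - 1) * (e * (s * p)))
        - e * s * (D * ((s + p * e * s - 1) * p)) := by
    noncomm_ring
  rw [r1, r2, r3] at key
  simp only [zero_mul, mul_zero, neg_zero, add_zero, sub_zero, zero_add] at key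
  exact sub_eq_zero.mp key

/-- Basic Perturbation Lemma, part 2: the perturbed projection
`f_δ = f ∘ (id - δ ∘ Σ ∘ φ)` is a chain map: `f_δ ∘ (dN + δ) = (dM + d_δ) ∘ f_δ`. -/
theorem bpl_fδ_chain_map
    (R : Type*) [CommRing R] (N M : Type*)
    [AddCommGroup N] [Module R N] [AddCommGroup M] [Module R M]
    (dN : N →ₗ[R] N) (dM : M →ₗ[R] M)
    (hdN : dN ∘ₗ dN = 0) (hdM : dM ∘ₗ dM = 0)
    (f : N →ₗ[R] M) (g : M →ₗ[R] N) (φ : N →ₗ[R] N)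
    (hf : f ∘ₗ dN = dM ∘ₗ f) (hg : g ∘ₗ dM = dN ∘ₗ g)
    (hfg : f ∘ₗ g = LinearMap.id)
    (hhom : φ ∘ₗ dN + dN ∘ₗ φ + g ∘ₗ f = LinearMap.id)
    (hfφ : f ∘ₗ φ = 0) (hφg : φ ∘ₗ g = 0) (hφφ : φ ∘ₗ φ = 0)
    (δ : N →ₗ[R] N) (hδ : (dN + δ) ∘ₗ (dN + δ) = 0)
    (n : ℕ) (hnil : (φ ∘ₗ δ) ^ n = 0) :
    (f ∘ₗ (LinearMap.id - δ ∘ₗ (∑ i ∈ Finset.range n, ((-1 : R) ^ i • (φ ∘ₗ δ) ^ i)) ∘ₗ φ)) ∘ₗ (dN + δ) =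
      (dM + f ∘ₗ δ ∘ₗ (∑ i ∈ Finset.range n, ((-1 : R) ^ i • (φ ∘ₗ δ) ^ i)) ∘ₗ g) ∘ₗ (f ∘ₗ (LinearMap.id - δ ∘ₗ (∑ i ∈ Finset.range n, ((-1 : R) ^ i • (φ ∘ₗ δ) ^ i)) ∘ₗ φ)) := by
  classical
  set s : N →ₗ[R] N := ∑ i ∈ Finset.range n, ((-1 : R) ^ i • (φ ∘ₗ δ) ^ i) with hs
  have hterm : ∀ i : ℕ, ((-1 : R) ^ i • (φ ∘ₗ δ) ^ i) = (-(φ ∘ₗ δ)) ^ i := by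
    intro i
    induction i with
    | zero => simp
    | succ k ih =>
        rw [pow_succ, pow_succ, pow_succ, ← ih, mul_comm ((-1 : R) ^ k), mul_smul,
          neg_one_smul, smul_mul_assoc, mul_neg, smul_neg]
  have hsgeom : s = ∑ i ∈ Finset.range n, (-(φ ∘ₗ δ)) ^ i := by
    rw [hs]; exact Finset.sum_congr rfl fun i _ => hterm i
  have hyn : (-(φ ∘ₗ δ)) ^ n = 0 := by
    rw [neg_pow, hnil, mul_zero]
  have hs1 : s * (1 + φ ∘ₗ δ) = 1 := by
    have h := geom_sum_mul (-(φ ∘ₗ δ)) n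
    rw [hyn, zero_sub] at h
    rw [hsgeom]
    have h3 : (∑ i ∈ Finset.range n, (-(φ ∘ₗ δ)) ^ i) * (1 + φ ∘ₗ δ)
        = -((∑ i ∈ Finset.range n, (-(φ ∘ₗ δ)) ^ i) * (-(φ ∘ₗ δ) - 1)) := by
      noncomm_ring
    rw [h3, h, neg_neg]
  have hs2 : (1 + φ ∘ₗ δ) * s = 1 := by
    have h := mul_geom_sum (-(φ ∘ₗ δ)) n
    rw [hyn, zero_sub] at h
    rw [hsgeom]
    have h3 : (1 + φ ∘ₗ δ) * (∑ i ∈ Finset.range n, (-(φ ∘ₗ δ)) ^ i)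
        = -((-(φ ∘ₗ δ) - 1) * ∑ i ∈ Finset.range n, (-(φ ∘ₗ δ)) ^ i) := by
      noncomm_ring
    rw [h3, h, neg_neg]
  have hGid : φ * dN + dN * φ + g ∘ₗ f = 1 := by
    simpa [Module.End.mul_eq_comp, Module.End.one_eq_id] using hhom
  have hDD : dN * dN = 0 := by simpa [Module.End.mul_eq_comp] using hdN
  have hpert : (dN + δ) * (dN + δ) = 0 := by simpa [Module.End.mul_eq_comp] using hδ
  have hs1' : s * (1 + φ * δ) = 1 := by simpa [Module.End.mul_eq_comp] using hs1
  have hs2' : (1 + φ * δ) * s = 1 := by simpa [Module.End.mul_eq_comp] using hs2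
  have key := bpl_ring_aux dN δ φ s (g ∘ₗ f) hDD hpert hGid hs1' hs2'
  have key' : (LinearMap.id - δ ∘ₗ s ∘ₗ φ) ∘ₗ (dN + δ)
      = dN ∘ₗ (LinearMap.id - δ ∘ₗ s ∘ₗ φ)
        + δ ∘ₗ s ∘ₗ (g ∘ₗ f) ∘ₗ (LinearMap.id - δ ∘ₗ s ∘ₗ φ) := by
    simp only [Module.End.mul_eq_comp, Module.End.one_eq_id] at key
    calc (LinearMap.id - δ ∘ₗ s ∘ₗ φ) ∘ₗ (dN + δ)
        = dN ∘ₗ (LinearMap.id - δ ∘ₗ s ∘ₗ φ)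
          + (δ ∘ₗ s) ∘ₗ ((g ∘ₗ f) ∘ₗ (LinearMap.id - δ ∘ₗ s ∘ₗ φ)) := by
          simpa [LinearMap.comp_assoc] using key
      _ = _ := by simp [LinearMap.comp_assoc]
  calc (f ∘ₗ (LinearMap.id - δ ∘ₗ s ∘ₗ φ)) ∘ₗ (dN + δ)
      = f ∘ₗ ((LinearMap.id - δ ∘ₗ s ∘ₗ φ) ∘ₗ (dN + δ)) := by
        rw [LinearMap.comp_assoc]
    _ = f ∘ₗ (dN ∘ₗ (LinearMap.id - δ ∘ₗ s ∘ₗ φ)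
          + δ ∘ₗ s ∘ₗ (g ∘ₗ f) ∘ₗ (LinearMap.id - δ ∘ₗ s ∘ₗ φ)) := by rw [key']
    _ = (dM + f ∘ₗ δ ∘ₗ s ∘ₗ g) ∘ₗ (f ∘ₗ (LinearMap.id - δ ∘ₗ s ∘ₗ φ)) := by
        simp only [LinearMap.comp_add, LinearMap.add_comp, ← LinearMap.comp_assoc, hf]
end

section
/- (Basic Perturbation Lemma, part 3.) Under the perturbation setup, the perturbed inclusion g_δ = Σ ∘ g is a chain map with respect to the perturbed differentials: (d_N + δ) ∘ g_δ = g_δ ∘ (d_M + d_δ). -/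
open LinearMap

/-- Basic Perturbation Lemma, part 3: the perturbed inclusion
`g_δ = Σ ∘ g` is a chain map: `(dN + δ) ∘ g_δ = g_δ ∘ (dM + d_δ)`. -/
theorem bpl_gδ_chain_map
    (R : Type*) [CommRing R] (N M : Type*)
    [AddCommGroup N] [Module R N] [AddCommGroup M] [Module R M]
    (dN : N →ₗ[R] N) (dM : M →ₗ[R] M)
    (hdN : dN ∘ₗ dN = 0) (hdM : dM ∘ₗ dM = 0)
    (f : N →ₗ[R] M) (g : M →ₗ[R] N) (φ : N →ₗ[R] N)
    (hf : f ∘ₗ dN = dM ∘ₗ f) (hg : g ∘ₗ dM = dN ∘ₗ g)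
    (hfg : f ∘ₗ g = LinearMap.id)
    (hhom : φ ∘ₗ dN + dN ∘ₗ φ + g ∘ₗ f = LinearMap.id)
    (hfφ : f ∘ₗ φ = 0) (hφg : φ ∘ₗ g = 0) (hφφ : φ ∘ₗ φ = 0)
    (δ : N →ₗ[R] N) (hδ : (dN + δ) ∘ₗ (dN + δ) = 0)
    (n : ℕ) (hnil : (φ ∘ₗ δ) ^ n = 0) :
    (dN + δ) ∘ₗ ((∑ i ∈ Finset.range n, ((-1 : R) ^ i • (φ ∘ₗ δ) ^ i)) ∘ₗ g) =
      ((∑ i ∈ Finset.range n, ((-1 : R) ^ i • (φ ∘ₗ δ) ^ i)) ∘ₗ g) ∘ₗ (dM + f ∘ₗ δ ∘ₗ (∑ i ∈ Finset.range n, ((-1 : R) ^ i • (φ ∘ₗ δ) ^ i)) ∘ₗ g) := by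
  set S : N →ₗ[R] N := ∑ i ∈ Finset.range n, ((-1 : R) ^ i • (φ ∘ₗ δ) ^ i) with hSdef
  set t : N →ₗ[R] N := φ ∘ₗ δ with ht
  -- S as a geometric sum in the endomorphism ring
  have hS : S = ∑ i ∈ Finset.range n, (-t) ^ i := by
    rw [hSdef]
    refine Finset.sum_congr rfl fun i _ => ?_
    rw [← neg_one_smul R t, smul_pow]
  have hnegt : (-t) ^ n = 0 := by
    rw [neg_pow, hnil, mul_zero]
  have h1 : S * (1 + t) = 1 := by
    have h := geom_sum_mul (-t) n
    rw [hnegt, zero_sub] at h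
    rw [hS]
    have h2 : (∑ i ∈ Finset.range n, (-t) ^ i) * (1 + t)
        = -((∑ i ∈ Finset.range n, (-t) ^ i) * (-t - 1)) := by noncomm_ring
    rw [h2, h, neg_neg]
  have h2 : (1 + t) * S = 1 := by
    have h := mul_geom_sum (-t) n
    rw [hnegt, zero_sub] at h
    rw [hS]
    have h2 : (1 + t) * (∑ i ∈ Finset.range n, (-t) ^ i)
        = -((-t - 1) * ∑ i ∈ Finset.range n, (-t) ^ i) := by noncomm_ring
    rw [h2, h, neg_neg]
  -- algebraic identities in the endomorphism ring
  have hdN' : dN * dN = 0 := hdN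
  have hδ' : (dN + δ) * (dN + δ) = 0 := hδ
  have hδ2 : δ * δ = -(dN * δ + δ * dN) := by
    have h : (dN * δ + δ * dN) + δ * δ = 0 := by
      calc (dN * δ + δ * dN) + δ * δ = (dN + δ) * (dN + δ) - dN * dN := by noncomm_ring
      _ = 0 := by rw [hδ', hdN']; abel
    exact eq_neg_of_add_eq_zero_right h
  have hhom' : φ * dN + dN * φ + g ∘ₗ f = 1 := hhom
  have hφdN : φ * dN = 1 - dN * φ - g ∘ₗ f := by
    rw [← hhom']; noncomm_ring
  have K : (1 + t) * (dN + δ) = dN * (1 + t) + (g ∘ₗ f) * δ := by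
    rw [ht]
    calc (1 + φ ∘ₗ δ) * (dN + δ)
        = dN + δ + (φ * δ) * dN + φ * (δ * δ) := by
          rw [show φ ∘ₗ δ = φ * δ from rfl]; noncomm_ring
      _ = dN + δ + (φ * δ) * dN + φ * (-(dN * δ + δ * dN)) := by rw [hδ2]
      _ = dN + δ - (φ * dN) * δ := by noncomm_ring
      _ = dN + δ - (1 - dN * φ - g ∘ₗ f) * δ := by rw [hφdN]
      _ = dN * (1 + φ ∘ₗ δ) + (g ∘ₗ f) * δ := by
          rw [show φ ∘ₗ δ = φ * δ from rfl]; noncomm_ring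
  -- convert the ring identities to composition form
  have h1c : S ∘ₗ ((1 : N →ₗ[R] N) + t) = LinearMap.id := h1
  have h2c : ((1 : N →ₗ[R] N) + t) ∘ₗ S = LinearMap.id := h2
  have Kc : ((1 : N →ₗ[R] N) + t) ∘ₗ (dN + δ) = dN ∘ₗ ((1 : N →ₗ[R] N) + t) + (g ∘ₗ f) ∘ₗ δ := K
  -- it suffices to prove the identity after composing with (1 + t) on the left
  suffices hs : ((1 : N →ₗ[R] N) + t) ∘ₗ ((dN + δ) ∘ₗ (S ∘ₗ g)) =
      ((1 : N →ₗ[R] N) + t) ∘ₗ ((S ∘ₗ g) ∘ₗ (dM + f ∘ₗ δ ∘ₗ S ∘ₗ g)) by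
    have := congrArg (fun X => S ∘ₗ X) hs
    simpa only [← LinearMap.comp_assoc, h1c, LinearMap.id_comp] using this
  -- now prove it
  calc ((1 : N →ₗ[R] N) + t) ∘ₗ ((dN + δ) ∘ₗ (S ∘ₗ g))
      = (((1 : N →ₗ[R] N) + t) ∘ₗ (dN + δ)) ∘ₗ (S ∘ₗ g) := by
        rw [LinearMap.comp_assoc]
    _ = (dN ∘ₗ ((1 : N →ₗ[R] N) + t) + (g ∘ₗ f) ∘ₗ δ) ∘ₗ (S ∘ₗ g) := by rw [Kc]
    _ = dN ∘ₗ ((((1 : N →ₗ[R] N) + t) ∘ₗ S) ∘ₗ g) + g ∘ₗ (f ∘ₗ δ ∘ₗ S ∘ₗ g) := by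
        rw [LinearMap.add_comp]
        simp only [LinearMap.comp_assoc]
    _ = dN ∘ₗ g + g ∘ₗ (f ∘ₗ δ ∘ₗ S ∘ₗ g) := by rw [h2c, LinearMap.id_comp]
    _ = g ∘ₗ dM + g ∘ₗ (f ∘ₗ δ ∘ₗ S ∘ₗ g) := by rw [hg]
    _ = g ∘ₗ (dM + f ∘ₗ δ ∘ₗ S ∘ₗ g) := by rw [LinearMap.comp_add]
    _ = (((1 : N →ₗ[R] N) + t) ∘ₗ (S ∘ₗ g)) ∘ₗ (dM + f ∘ₗ δ ∘ₗ S ∘ₗ g) := by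
        rw [← LinearMap.comp_assoc g S ((1 : N →ₗ[R] N) + t), h2c, LinearMap.id_comp]
    _ = ((1 : N →ₗ[R] N) + t) ∘ₗ ((S ∘ₗ g) ∘ₗ (dM + f ∘ₗ δ ∘ₗ S ∘ₗ g)) := by
        rw [LinearMap.comp_assoc]
end

section
/- (Basic Perturbation Lemma, part 4.) Under the perturbation setup, the perturbed projection and inclusion satisfy f_δ ∘ g_δ = id_M. -/
/-!
Write `S = ∑_{i<n} (-1)^i (φδ)^i`. Since `(φδ)^n = 0`, the alternating geometric series `S` is
a right inverse of `1 + φδ`. Hence any map `a` with `a ∘ φ = 0` satisfies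
`a ∘ S = a ∘ (1 + φδ) ∘ S = a`. Applied to `a = f` and `a = φ` this gives `f ∘ S = f` and
`φ ∘ S ∘ g = φ ∘ g = 0`, so `f_δ ∘ g_δ = f ∘ S ∘ g - f ∘ δ ∘ S ∘ φ ∘ S ∘ g = f ∘ g = id`.
-/

open LinearMap

theorem one_add_mul_sum_neg_one_pow_smul_pow_of_pow_eq_zero {R A : Type*} [CommRing R] [Ring A]
    [Algebra R A] {x : A} {n : ℕ} (hx : x ^ n = 0) :
    (1 + x) * ∑ i ∈ Finset.range n, (-1 : R) ^ i • x ^ i = 1 := by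
  have hterm (i : ℕ) : (-1 : R) ^ i • x ^ i = (-x) ^ i := by
    rw [← smul_pow, neg_one_smul]
  simp only [hterm]
  simpa [neg_pow x n, hx] using mul_neg_geom_sum (-x) n

section

variable {R N P : Type*} [CommRing R] [AddCommGroup N] [Module R N] [AddCommGroup P] [Module R P]

theorem comp_sum_neg_one_pow_smul_pow_of_comp_eq_zero {a : N →ₗ[R] P} {T : N →ₗ[R] N} {n : ℕ}
    (haT : a ∘ₗ T = 0) (hT : T ^ n = 0) :
    a ∘ₗ ∑ i ∈ Finset.range n, (-1 : R) ^ i • T ^ i = a := by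
  have ha : a ∘ₗ (1 + T) = a := by
    rw [comp_add, haT, add_zero, Module.End.one_eq_id, comp_id]
  calc a ∘ₗ ∑ i ∈ Finset.range n, (-1 : R) ^ i • T ^ i
      = a ∘ₗ ((1 + T) * ∑ i ∈ Finset.range n, (-1 : R) ^ i • T ^ i) := by
        rw [Module.End.mul_eq_comp, ← comp_assoc, ha]
    _ = a := by
        rw [one_add_mul_sum_neg_one_pow_smul_pow_of_pow_eq_zero hT, Module.End.one_eq_id, comp_id]

end

theorem bpl_fδ_gδ_general
    (R : Type*) [CommRing R] (N M : Type*)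
    [AddCommGroup N] [Module R N] [AddCommGroup M] [Module R M]
    (f : N →ₗ[R] M) (g : M →ₗ[R] N) (φ : N →ₗ[R] N)
    (hfg : f ∘ₗ g = LinearMap.id)
    (hfφ : f ∘ₗ φ = 0) (hφg : φ ∘ₗ g = 0) (hφφ : φ ∘ₗ φ = 0)
    (δ : N →ₗ[R] N)
    (n : ℕ) (hnil : (φ ∘ₗ δ) ^ n = 0) :
    (f ∘ₗ (LinearMap.id - δ ∘ₗ (∑ i ∈ Finset.range n, ((-1 : R) ^ i • (φ ∘ₗ δ) ^ i)) ∘ₗ φ)) ∘ₗ ((∑ i ∈ Finset.range n, ((-1 : R) ^ i • (φ ∘ₗ δ) ^ i)) ∘ₗ g) = LinearMap.id := by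
  set S := ∑ i ∈ Finset.range n, ((-1 : R) ^ i • (φ ∘ₗ δ) ^ i)
  have hfS : f ∘ₗ S = f :=
    comp_sum_neg_one_pow_smul_pow_of_comp_eq_zero (by rw [← comp_assoc, hfφ, zero_comp]) hnil
  have hφS : φ ∘ₗ S = φ :=
    comp_sum_neg_one_pow_smul_pow_of_comp_eq_zero (by rw [← comp_assoc, hφφ, zero_comp]) hnil
  calc (f ∘ₗ (LinearMap.id - δ ∘ₗ S ∘ₗ φ)) ∘ₗ (S ∘ₗ g)
      = f ∘ₗ S ∘ₗ g - f ∘ₗ δ ∘ₗ S ∘ₗ (φ ∘ₗ S) ∘ₗ g := by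
        simp only [sub_comp, comp_sub, comp_id, comp_assoc]
    _ = LinearMap.id := by
        rw [hφS, hφg, comp_zero, comp_zero, comp_zero, sub_zero, ← comp_assoc, hfS, hfg]

/-- Basic Perturbation Lemma, part 4: `f_δ ∘ g_δ = id`. -/
theorem bpl_fδ_gδ
    (R : Type*) [CommRing R] (N M : Type*)
    [AddCommGroup N] [Module R N] [AddCommGroup M] [Module R M]
    (dN : N →ₗ[R] N) (dM : M →ₗ[R] M)
    (hdN : dN ∘ₗ dN = 0) (hdM : dM ∘ₗ dM = 0)
    (f : N →ₗ[R] M) (g : M →ₗ[R] N) (φ : N →ₗ[R] N)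
    (hf : f ∘ₗ dN = dM ∘ₗ f) (hg : g ∘ₗ dM = dN ∘ₗ g)
    (hfg : f ∘ₗ g = LinearMap.id)
    (hhom : φ ∘ₗ dN + dN ∘ₗ φ + g ∘ₗ f = LinearMap.id)
    (hfφ : f ∘ₗ φ = 0) (hφg : φ ∘ₗ g = 0) (hφφ : φ ∘ₗ φ = 0)
    (δ : N →ₗ[R] N) (hδ : (dN + δ) ∘ₗ (dN + δ) = 0)
    (n : ℕ) (hnil : (φ ∘ₗ δ) ^ n = 0) :
    (f ∘ₗ (LinearMap.id - δ ∘ₗ (∑ i ∈ Finset.range n, ((-1 : R) ^ i • (φ ∘ₗ δ) ^ i)) ∘ₗ φ)) ∘ₗ ((∑ i ∈ Finset.range n, ((-1 : R) ^ i • (φ ∘ₗ δ) ^ i)) ∘ₗ g) = LinearMap.id :=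
  bpl_fδ_gδ_general R N M f g φ hfg hfφ hφg hφφ δ n hnil
end

section
/- (Basic Perturbation Lemma, part 5.) Under the perturbation setup, the perturbed homotopy identity holds: φ_δ ∘ (d_N + δ) + (d_N + δ) ∘ φ_δ + g_δ ∘ f_δ = id_N. -/
open LinearMap

private lemma bpl_aux {S : Type*} [Ring S] (d e φ s t : S)
    (hE1 : s * (φ * e) = 1 - s)
    (hE2 : φ * (e * s) = 1 - s)
    (hE3 : s * φ = φ * t)
    (hE4 : e * s = t * e)
    (hE5 : t * (e * φ) = 1 - t)
    (hE8 : d * e + e * d + e * e = 0) :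
    s*φ*(d+e) + (d+e)*(s*φ) + (s*(1 - φ*d - d*φ))*(1 - e*(s*φ)) = 1 := by
  have m1 : ∀ x : S, s*(φ*x) = φ*(t*x) := fun x => by
    rw [← mul_assoc, hE3, mul_assoc]
  have m2 : ∀ x : S, e*(s*x) = t*(e*x) := fun x => by
    rw [← mul_assoc, hE4, mul_assoc]
  have hesφ : e*(s*φ) = 1 - t := by rw [← mul_assoc, hE4, mul_assoc, hE5]
  have k1 : φ*(t*d) - φ*(t*(d*t)) = φ*(t*(d*(e*(φ*t)))) := by
    calc φ*(t*d) - φ*(t*(d*t)) = φ*(t*(d*(1 - t))) := by noncomm_ring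
    _ = φ*(t*(d*(t*(e*φ)))) := by rw [← hE5]
    _ = φ*(t*(d*(e*(s*φ)))) := by rw [← m2]
    _ = φ*(t*(d*(e*(φ*t)))) := by rw [hE3]
  have k2 : d*(φ*t) - s*(d*(φ*t)) = φ*(t*(e*(d*(φ*t)))) := by
    calc d*(φ*t) - s*(d*(φ*t)) = (1 - s)*(d*(φ*t)) := by noncomm_ring
    _ = (φ*(e*s))*(d*(φ*t)) := by rw [hE2]
    _ = (φ*(t*e))*(d*(φ*t)) := by rw [hE4]
    _ = φ*(t*(e*(d*(φ*t)))) := by noncomm_ring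
  have k3 : 1 - s - t + s*t = φ*(t*(e*(e*(φ*t)))) := by
    calc 1 - s - t + s*t = (1-s)*(1-t) := by noncomm_ring
    _ = (φ*(e*s))*(t*(e*φ)) := by rw [hE2, hE5]
    _ = (φ*(e*s))*(e*(s*φ)) := by rw [← m2]
    _ = (φ*(t*e))*(e*(s*φ)) := by rw [hE4]
    _ = (φ*(t*e))*(e*(φ*t)) := by rw [hE3]
    _ = φ*(t*(e*(e*(φ*t)))) := by noncomm_ring
  calc s*φ*(d+e) + (d+e)*(s*φ) + (s*(1 - φ*d - d*φ))*(1 - e*(s*φ))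
      = s*(φ*e) + d*(s*φ) + e*(s*φ) + s - s*(d*φ) - s*(e*(s*φ))
        + s*(φ*(d*(e*(s*φ)))) + s*(d*(φ*(e*(s*φ)))) := by noncomm_ring
    _ = (1-s) + d*(s*φ) + (1-t) + s - s*(d*φ) - s*(1-t)
        + s*(φ*(d*(1-t))) + s*(d*(φ*(1-t))) := by rw [hesφ, hE1]
    _ = (1-s) + d*(φ*t) + (1-t) + s - s*(d*φ) - s*(1-t)
        + s*(φ*(d*(1-t))) + s*(d*(φ*(1-t))) := by rw [hE3]
    _ = (1-s) + d*(φ*t) + (1-t) + s - s*(d*φ) - s*(1-t)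
        + φ*(t*(d*(1-t))) + s*(d*(φ*(1-t))) := by rw [m1]
    _ = (φ*(t*d) - φ*(t*(d*t))) + (d*(φ*t) - s*(d*(φ*t)))
        + (1 - s - t + s*t) + 1 := by noncomm_ring
    _ = φ*(t*(d*(e*(φ*t)))) + φ*(t*(e*(d*(φ*t)))) + φ*(t*(e*(e*(φ*t)))) + 1 := by
        rw [k1, k2, k3]
    _ = (φ*t)*((d*e + e*d + e*e)*(φ*t)) + 1 := by noncomm_ring
    _ = 1 := by rw [hE8, zero_mul, mul_zero, zero_add]

/-- Basic Perturbation Lemma, part 5: the perturbed homotopy identity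
`φ_δ ∘ (dN + δ) + (dN + δ) ∘ φ_δ + g_δ ∘ f_δ = id`. -/
theorem bpl_homotopy
    (R : Type*) [CommRing R] (N M : Type*)
    [AddCommGroup N] [Module R N] [AddCommGroup M] [Module R M]
    (dN : N →ₗ[R] N) (dM : M →ₗ[R] M)
    (hdN : dN ∘ₗ dN = 0) (hdM : dM ∘ₗ dM = 0)
    (f : N →ₗ[R] M) (g : M →ₗ[R] N) (φ : N →ₗ[R] N)
    (hf : f ∘ₗ dN = dM ∘ₗ f) (hg : g ∘ₗ dM = dN ∘ₗ g)
    (hfg : f ∘ₗ g = LinearMap.id)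
    (hhom : φ ∘ₗ dN + dN ∘ₗ φ + g ∘ₗ f = LinearMap.id)
    (hfφ : f ∘ₗ φ = 0) (hφg : φ ∘ₗ g = 0) (hφφ : φ ∘ₗ φ = 0)
    (δ : N →ₗ[R] N) (hδ : (dN + δ) ∘ₗ (dN + δ) = 0)
    (n : ℕ) (hnil : (φ ∘ₗ δ) ^ n = 0) :
    ((∑ i ∈ Finset.range n, ((-1 : R) ^ i • (φ ∘ₗ δ) ^ i)) ∘ₗ φ) ∘ₗ (dN + δ) + (dN + δ) ∘ₗ ((∑ i ∈ Finset.range n, ((-1 : R) ^ i • (φ ∘ₗ δ) ^ i)) ∘ₗ φ) +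
      ((∑ i ∈ Finset.range n, ((-1 : R) ^ i • (φ ∘ₗ δ) ^ i)) ∘ₗ g) ∘ₗ (f ∘ₗ (LinearMap.id - δ ∘ₗ (∑ i ∈ Finset.range n, ((-1 : R) ^ i • (φ ∘ₗ δ) ^ i)) ∘ₗ φ)) = LinearMap.id := by
  -- replace g ∘ f using the homotopy identity
  have hq : g ∘ₗ f = LinearMap.id - φ ∘ₗ dN - dN ∘ₗ φ := by rw [← hhom]; abel
  have hassoc : ∀ (X Y : N →ₗ[R] N), (Y ∘ₗ g) ∘ₗ (f ∘ₗ X) = Y ∘ₗ ((g ∘ₗ f) ∘ₗ X) := fun _ _ => rfl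
  rw [hassoc, hq]
  simp only [← Module.End.mul_eq_comp, ← Module.End.one_eq_id] at hδ hdN hnil ⊢
  -- rewrite the geometric sum with (-1)^i • a^i = (-a)^i
  have hsmul : ∀ (c : Module.End R N) (i : ℕ), ((-1 : R) ^ i • c ^ i) = (-c) ^ i := by
    intro c i
    rw [← neg_one_smul R c, smul_pow]
  have hsum : (∑ i ∈ Finset.range n, ((-1 : R) ^ i • (φ * δ) ^ i))
      = ∑ i ∈ Finset.range n, (-(φ * δ)) ^ i :=
    Finset.sum_congr rfl fun i _ => hsmul _ i
  rw [hsum]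
  set a : Module.End R N := φ * δ with ha
  set b : Module.End R N := δ * φ with hb
  set s : Module.End R N := ∑ i ∈ Finset.range n, (-a) ^ i with hs
  set t : Module.End R N := ∑ i ∈ Finset.range (n+1), (-b) ^ i with ht
  have hna : (-a) ^ n = 0 := by rw [neg_pow, hnil, mul_zero]
  -- semiconjugation relations
  have hscδ : SemiconjBy δ (-a) (-b) := by
    show δ * (-a) = (-b) * δ
    rw [mul_neg, neg_mul, ha, hb, mul_assoc]
  have hscφ : SemiconjBy φ (-b) (-a) := by
    show φ * (-b) = (-a) * φ
    rw [mul_neg, neg_mul, ha, hb, mul_assoc]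
  have hbn : (-b) ^ (n+1) = 0 := by
    calc (-b) ^ (n+1) = (-b) ^ n * (-b) := pow_succ _ _
    _ = (-b) ^ n * (δ * (-φ)) := by rw [mul_neg δ φ, ← hb]
    _ = ((-b) ^ n * δ) * (-φ) := (mul_assoc _ _ _).symm
    _ = (δ * (-a) ^ n) * (-φ) := by rw [← (hscδ.pow_right n).eq]
    _ = 0 := by rw [hna, mul_zero, zero_mul]
  -- geometric series identities
  have hsa : s * a = 1 - s := by
    have h4 := geom_sum_mul (-a) n
    rw [hna, ← hs] at h4
    calc s * a = -(s * (-a - 1)) - s := by noncomm_ring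
    _ = -(0 - 1) - s := by rw [h4]
    _ = 1 - s := by noncomm_ring
  have has : a * s = 1 - s := by
    have h4 := mul_geom_sum (-a) n
    rw [hna, ← hs] at h4
    calc a * s = -((-a - 1) * s) - s := by noncomm_ring
    _ = -(0 - 1) - s := by rw [h4]
    _ = 1 - s := by noncomm_ring
  have htb : t * b = 1 - t := by
    have h4 := geom_sum_mul (-b) (n+1)
    rw [hbn, ← ht] at h4
    calc t * b = -(t * (-b - 1)) - t := by noncomm_ring
    _ = -(0 - 1) - t := by rw [h4]
    _ = 1 - t := by noncomm_ring
  -- the five interchange identities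
  have hE1 : s * (φ * δ) = 1 - s := by rw [← ha]; exact hsa
  have hE2 : φ * (δ * s) = 1 - s := by rw [← mul_assoc, ← ha]; exact has
  have hE5 : t * (δ * φ) = 1 - t := by rw [← hb]; exact htb
  have hE3 : s * φ = φ * t := by
    calc s * φ = ∑ i ∈ Finset.range n, (-a) ^ i * φ := by rw [hs, Finset.sum_mul]
    _ = ∑ i ∈ Finset.range n, φ * (-b) ^ i :=
        Finset.sum_congr rfl fun i _ => ((hscφ.pow_right i).eq).symm
    _ = ∑ i ∈ Finset.range (n+1), φ * (-b) ^ i := by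
        rw [Finset.sum_range_succ, (hscφ.pow_right n).eq, hna, zero_mul, add_zero]
    _ = φ * t := by rw [ht, Finset.mul_sum]
  have hE4 : δ * s = t * δ := by
    calc δ * s = ∑ i ∈ Finset.range n, δ * (-a) ^ i := by rw [hs, Finset.mul_sum]
    _ = ∑ i ∈ Finset.range n, (-b) ^ i * δ :=
        Finset.sum_congr rfl fun i _ => (hscδ.pow_right i).eq
    _ = ∑ i ∈ Finset.range (n+1), (-b) ^ i * δ := by
        rw [Finset.sum_range_succ, ← (hscδ.pow_right n).eq, hna, mul_zero, add_zero]
    _ = t * δ := by rw [ht, Finset.sum_mul]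
  have hE8 : dN * δ + δ * dN + δ * δ = 0 := by
    calc dN * δ + δ * dN + δ * δ = (dN + δ) * (dN + δ) - dN * dN := by noncomm_ring
    _ = 0 := by rw [hδ, hdN, sub_zero]
  exact Eq.trans (by noncomm_ring) (bpl_aux dN δ φ s t hE1 hE2 hE3 hE4 hE5 hE8)
end

section
/- (Basic Perturbation Lemma, part 6.) Under the perturbation setup, the side condition f_δ ∘ φ_δ = 0 holds. -/
open LinearMap

/-! Since `(φδ)ⁱφ = φ(δφ)ⁱ`, the perturbed homotopy `φ_δ = Σφ` factors as `φ ∘ Σ'` with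
`Σ' = ∑ (-1)ⁱ (δφ)ⁱ`. Hence `f ∘ φ_δ = 0` because `f ∘ φ = 0`, and `φ_δ ∘ φ_δ = Σ(φφ)Σ' = 0`, which kills
the correction term `f δ φ_δ φ_δ` of `f_δ ∘ φ_δ`. -/

theorem sum_smul_mul_pow_mul {R A ι : Type*} [CommSemiring R] [Semiring A] [Algebra R A]
    (s : Finset ι) (c : ι → R) (e : ι → ℕ) (a b : A) :
    (∑ i ∈ s, c i • (a * b) ^ e i) * a = a * ∑ i ∈ s, c i • (b * a) ^ e i := by
  simp only [Finset.sum_mul, Finset.mul_sum, smul_mul_assoc, mul_smul_comm, mul_pow_mul]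

theorem bpl_fδ_φδ_general
    (R : Type*) [CommRing R] (N M : Type*)
    [AddCommGroup N] [Module R N] [AddCommGroup M] [Module R M]
    (f : N →ₗ[R] M) (φ : N →ₗ[R] N)
    (hfφ : f ∘ₗ φ = 0) (hφφ : φ ∘ₗ φ = 0)
    (δ : N →ₗ[R] N)
    (n : ℕ) :
    (f ∘ₗ (LinearMap.id - δ ∘ₗ (∑ i ∈ Finset.range n, ((-1 : R) ^ i • (φ ∘ₗ δ) ^ i)) ∘ₗ φ)) ∘ₗ ((∑ i ∈ Finset.range n, ((-1 : R) ^ i • (φ ∘ₗ δ) ^ i)) ∘ₗ φ) = 0 := by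
  set S := ∑ i ∈ Finset.range n, ((-1 : R) ^ i • (φ ∘ₗ δ) ^ i)
  set S' := ∑ i ∈ Finset.range n, ((-1 : R) ^ i • (δ ∘ₗ φ) ^ i)
  have hSφ : S ∘ₗ φ = φ ∘ₗ S' := sum_smul_mul_pow_mul _ _ id φ δ
  have hf_φδ : f ∘ₗ (S ∘ₗ φ) = 0 := by rw [hSφ, ← comp_assoc, hfφ, zero_comp]
  have hφδ_φδ : (S ∘ₗ φ) ∘ₗ (S ∘ₗ φ) = 0 := by
    rw [comp_assoc, hSφ, ← comp_assoc S', hφφ, zero_comp, comp_zero]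
  calc (f ∘ₗ (LinearMap.id - δ ∘ₗ S ∘ₗ φ)) ∘ₗ (S ∘ₗ φ)
      = f ∘ₗ (S ∘ₗ φ) - f ∘ₗ δ ∘ₗ ((S ∘ₗ φ) ∘ₗ (S ∘ₗ φ)) := by
        simp only [comp_sub, sub_comp, id_comp, comp_assoc]
    _ = 0 := by rw [hf_φδ, hφδ_φδ, comp_zero, comp_zero, sub_zero]

/-- Basic Perturbation Lemma, part 6: `f_δ ∘ φ_δ = 0`. -/
theorem bpl_fδ_φδ
    (R : Type*) [CommRing R] (N M : Type*)
    [AddCommGroup N] [Module R N] [AddCommGroup M] [Module R M]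
    (dN : N →ₗ[R] N) (dM : M →ₗ[R] M)
    (hdN : dN ∘ₗ dN = 0) (hdM : dM ∘ₗ dM = 0)
    (f : N →ₗ[R] M) (g : M →ₗ[R] N) (φ : N →ₗ[R] N)
    (hf : f ∘ₗ dN = dM ∘ₗ f) (hg : g ∘ₗ dM = dN ∘ₗ g)
    (hfg : f ∘ₗ g = LinearMap.id)
    (hhom : φ ∘ₗ dN + dN ∘ₗ φ + g ∘ₗ f = LinearMap.id)
    (hfφ : f ∘ₗ φ = 0) (hφg : φ ∘ₗ g = 0) (hφφ : φ ∘ₗ φ = 0)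
    (δ : N →ₗ[R] N) (hδ : (dN + δ) ∘ₗ (dN + δ) = 0)
    (n : ℕ) (hnil : (φ ∘ₗ δ) ^ n = 0) :
    (f ∘ₗ (LinearMap.id - δ ∘ₗ (∑ i ∈ Finset.range n, ((-1 : R) ^ i • (φ ∘ₗ δ) ^ i)) ∘ₗ φ)) ∘ₗ ((∑ i ∈ Finset.range n, ((-1 : R) ^ i • (φ ∘ₗ δ) ^ i)) ∘ₗ φ) = 0 :=
  bpl_fδ_φδ_general R N M f φ hfφ hφφ δ n
end

section
/- (Basic Perturbation Lemma, part 7.) Under the perturbation setup, the side condition φ_δ ∘ g_δ = 0 holds. -/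
open LinearMap

private lemma my_sum_comp {R N M P : Type*} [CommRing R] [AddCommGroup N] [Module R N]
    [AddCommGroup M] [Module R M] [AddCommGroup P] [Module R P]
    (s : Finset ℕ) (F : ℕ → N →ₗ[R] P) (g : M →ₗ[R] N) :
    (∑ i ∈ s, F i) ∘ₗ g = ∑ i ∈ s, (F i ∘ₗ g) := by
  ext x; simp [LinearMap.sum_apply]

private lemma my_comp_sum {R N M P : Type*} [CommRing R] [AddCommGroup N] [Module R N]
    [AddCommGroup M] [Module R M] [AddCommGroup P] [Module R P]
    (s : Finset ℕ) (f : N →ₗ[R] P) (G : ℕ → M →ₗ[R] N) :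
    f ∘ₗ (∑ i ∈ s, G i) = ∑ i ∈ s, (f ∘ₗ G i) := by
  ext x; simp [LinearMap.sum_apply]

/-- Basic Perturbation Lemma, part 7: `φ_δ ∘ g_δ = 0`. -/
theorem bpl_φδ_gδ
    (R : Type*) [CommRing R] (N M : Type*)
    [AddCommGroup N] [Module R N] [AddCommGroup M] [Module R M]
    (dN : N →ₗ[R] N) (dM : M →ₗ[R] M)
    (hdN : dN ∘ₗ dN = 0) (hdM : dM ∘ₗ dM = 0)
    (f : N →ₗ[R] M) (g : M →ₗ[R] N) (φ : N →ₗ[R] N)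
    (hf : f ∘ₗ dN = dM ∘ₗ f) (hg : g ∘ₗ dM = dN ∘ₗ g)
    (hfg : f ∘ₗ g = LinearMap.id)
    (hhom : φ ∘ₗ dN + dN ∘ₗ φ + g ∘ₗ f = LinearMap.id)
    (hfφ : f ∘ₗ φ = 0) (hφg : φ ∘ₗ g = 0) (hφφ : φ ∘ₗ φ = 0)
    (δ : N →ₗ[R] N) (hδ : (dN + δ) ∘ₗ (dN + δ) = 0)
    (n : ℕ) (hnil : (φ ∘ₗ δ) ^ n = 0) :
    ((∑ i ∈ Finset.range n, ((-1 : R) ^ i • (φ ∘ₗ δ) ^ i)) ∘ₗ φ) ∘ₗ ((∑ i ∈ Finset.range n, ((-1 : R) ^ i • (φ ∘ₗ δ) ^ i)) ∘ₗ g) = 0 := by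
  have key : ∀ i j : ℕ, (((φ ∘ₗ δ) ^ i) ∘ₗ φ) ∘ₗ (((φ ∘ₗ δ) ^ j) ∘ₗ g) = 0 := by
    intro i j
    cases j with
    | zero =>
      simp only [pow_zero, Module.End.one_eq_id, id_comp, LinearMap.comp_assoc, hφg, comp_zero]
    | succ j =>
      have h1 : (φ ∘ₗ δ) ^ (j + 1) = φ ∘ₗ (δ ∘ₗ (φ ∘ₗ δ) ^ j) := by
        rw [pow_succ']
        rw [Module.End.mul_eq_comp, LinearMap.comp_assoc]
      rw [h1]
      calc (((φ ∘ₗ δ) ^ i) ∘ₗ φ) ∘ₗ ((φ ∘ₗ (δ ∘ₗ (φ ∘ₗ δ) ^ j)) ∘ₗ g)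
          = ((φ ∘ₗ δ) ^ i) ∘ₗ ((φ ∘ₗ φ) ∘ₗ ((δ ∘ₗ (φ ∘ₗ δ) ^ j) ∘ₗ g)) := by
            simp only [LinearMap.comp_assoc]
        _ = 0 := by rw [hφφ]; simp
  simp only [my_sum_comp, my_comp_sum, LinearMap.smul_comp, LinearMap.comp_smul]
  refine Finset.sum_eq_zero fun i _ => ?_
  rw [Finset.sum_eq_zero fun j _ => by rw [key j i]; simp, smul_zero]
end

section
/- (Basic Perturbation Lemma, part 8.) Under the perturbation setup, the side condition φ_δ ∘ φ_δ = 0 holds. -/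
/-!
With `Σ = ∑ ± (φδ)ⁱ` we have `φ_δ φ_δ = Σ (φ Σ φ)`, and every term `φ (φδ)ⁱ φ` of `φ Σ φ` contains
the factor `φφ = 0`.
-/

section SquareZero

variable {R A : Type*} [CommSemiring R] [Semiring A] [Algebra R A]

theorem mul_mul_pow_mul_eq_zero {p : A} (hp : p * p = 0) (a : A) (j : ℕ) :
    p * (p * a) ^ j * p = 0 := by
  cases j with
  | zero => simpa using hp
  | succ k => rw [pow_succ', ← mul_assoc, ← mul_assoc, hp, zero_mul, zero_mul, zero_mul]

theorem mul_sum_smul_pow_mul_eq_zero {p : A} (hp : p * p = 0) (a : A) (s : Finset ℕ)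
    (c : ℕ → R) : p * (∑ i ∈ s, c i • (p * a) ^ i) * p = 0 := by
  simp only [Finset.mul_sum, Finset.sum_mul, mul_smul_comm, smul_mul_assoc,
    mul_mul_pow_mul_eq_zero hp, smul_zero, Finset.sum_const_zero]

theorem sum_smul_pow_mul_mul_self_eq_zero {p : A} (hp : p * p = 0) (a : A) (s : Finset ℕ)
    (c : ℕ → R) :
    (∑ i ∈ s, c i • (p * a) ^ i) * p * ((∑ i ∈ s, c i • (p * a) ^ i) * p) = 0 := by
  rw [mul_assoc, ← mul_assoc p, mul_sum_smul_pow_mul_eq_zero hp, mul_zero]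

end SquareZero

theorem bpl_φδ_φδ_general
    (R : Type*) [CommRing R] (N : Type*)
    [AddCommGroup N] [Module R N]
    (φ : N →ₗ[R] N)
    (hφφ : φ ∘ₗ φ = 0)
    (δ : N →ₗ[R] N)
    (n : ℕ) :
    ((∑ i ∈ Finset.range n, ((-1 : R) ^ i • (φ ∘ₗ δ) ^ i)) ∘ₗ φ) ∘ₗ ((∑ i ∈ Finset.range n, ((-1 : R) ^ i • (φ ∘ₗ δ) ^ i)) ∘ₗ φ) = 0 := by
  simp only [← Module.End.mul_eq_comp] at hφφ ⊢
  exact sum_smul_pow_mul_mul_self_eq_zero hφφ δ _ _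

/-- Basic Perturbation Lemma, part 8: `φ_δ ∘ φ_δ = 0`. -/
theorem bpl_φδ_φδ
    (R : Type*) [CommRing R] (N M : Type*)
    [AddCommGroup N] [Module R N] [AddCommGroup M] [Module R M]
    (dN : N →ₗ[R] N) (dM : M →ₗ[R] M)
    (hdN : dN ∘ₗ dN = 0) (hdM : dM ∘ₗ dM = 0)
    (f : N →ₗ[R] M) (g : M →ₗ[R] N) (φ : N →ₗ[R] N)
    (hf : f ∘ₗ dN = dM ∘ₗ f) (hg : g ∘ₗ dM = dN ∘ₗ g)
    (hfg : f ∘ₗ g = LinearMap.id)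
    (hhom : φ ∘ₗ dN + dN ∘ₗ φ + g ∘ₗ f = LinearMap.id)
    (hfφ : f ∘ₗ φ = 0) (hφg : φ ∘ₗ g = 0) (hφφ : φ ∘ₗ φ = 0)
    (δ : N →ₗ[R] N) (hδ : (dN + δ) ∘ₗ (dN + δ) = 0)
    (n : ℕ) (hnil : (φ ∘ₗ δ) ^ n = 0) :
    ((∑ i ∈ Finset.range n, ((-1 : R) ^ i • (φ ∘ₗ δ) ^ i)) ∘ₗ φ) ∘ₗ ((∑ i ∈ Finset.range n, ((-1 : R) ^ i • (φ ∘ₗ δ) ^ i)) ∘ₗ φ) = 0 :=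
  bpl_φδ_φδ_general R N φ hφφ δ n
end
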